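/- Let 0 < a ≤ 1/√2 and λ ∈ ℂ with |λ| = 1 and λ ≠ 1, and let u = u(a,λ). Then Ω_u = {(z,w) ∈ ℂ²×ℂ² : ‖z‖ ≤ 1, ‖w‖ ≤ 1, a·z₁·w₁ + (1−a²)^{1/2}·z₂·w₂ = 0} and the core is Ω_u⁰ = {(0,0)}. -/

import Mathlib

/-! `u(a,λ) = 1 + (λ - 1) v vᵀ` with `v = a e₁₁ + √(1 - a²) e₂₂` a unit vector, so `u` fixes
`z ⊗ w` exactly when `(λ - 1) vᵀ (z ⊗ w) = 0`, i.e. when `a z₁ w₁ + √(1 - a²) z₂ w₂ = 0`.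
Likewise `C_(i,j) = (λ - 1) v_(i,j) diag(a, √(1 - a²))`; for `(i,j) = (1,1)` this matrix is
invertible, so `C_(1,1) w = 0` and `C_(1,1)ᵀ z = 0` force `w = 0` and `z = 0`.
(Lean indexes `Fin 2` by `0, 1` where the paper uses `1, 2`.) -/

open Matrix

/-- The 4×4 matrix `u(a,λ)`, indexed by `{1,2}×{1,2}` in lexicographic order. -/
noncomputable def uMat (a : ℝ) (l : ℂ) :
    Matrix (Fin 2 × Fin 2) (Fin 2 × Fin 2) ℂ :=
  Matrix.of fun p q =>
    if p = (0, 0) ∧ q = (0, 0) then (l - 1) * (a : ℂ) ^ 2 + 1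
    else if p = (0, 0) ∧ q = (1, 1) then (l - 1) * (a : ℂ) * (Real.sqrt (1 - a ^ 2) : ℂ)
    else if p = (1, 1) ∧ q = (0, 0) then (l - 1) * (a : ℂ) * (Real.sqrt (1 - a ^ 2) : ℂ)
    else if p = (1, 1) ∧ q = (1, 1) then l + (1 - l) * (a : ℂ) ^ 2
    else if p = q then 1 else 0

theorem ofReal_sqrt_one_sub_sq_sq {a : ℝ} (ha : a ^ 2 ≤ 1) :
    ((√(1 - a ^ 2) : ℝ) : ℂ) ^ 2 = 1 - (a : ℂ) ^ 2 := by
  rw [← Complex.ofReal_pow, Real.sq_sqrt (by linarith)]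
  push_cast
  ring

noncomputable def uVec (a : ℝ) : Fin 2 × Fin 2 → ℂ := fun p =>
  if p = (0, 0) then a else if p = (1, 1) then (√(1 - a ^ 2) : ℝ) else 0

theorem uMat_eq {a : ℝ} (ha : a ^ 2 ≤ 1) (lm : ℂ) :
    uMat a lm = 1 + (lm - 1) • vecMulVec (uVec a) (uVec a) := by
  have hs := ofReal_sqrt_one_sub_sq_sq ha
  ext ⟨i, j⟩ ⟨k, l⟩
  fin_cases i <;> fin_cases j <;> fin_cases k <;> fin_cases l <;>
    simp [uMat, uVec, vecMulVec_apply, one_apply, ← sq, hs] <;> ring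

theorem of_uVec_eq_diagonal (a : ℝ) :
    (of fun k l => uVec a (k, l)) = diagonal ![(a : ℂ), (√(1 - a ^ 2) : ℝ)] := by
  ext k l
  fin_cases k <;> fin_cases l <;> simp [uVec]

theorem sum_uVec_mul (a : ℝ) (z w : Fin 2 → ℂ) :
    ∑ k, ∑ l, uVec a (k, l) * z k * w l
      = a * z 0 * w 0 + (√(1 - a ^ 2) : ℝ) * z 1 * w 1 := by
  simp [uVec, Fin.sum_univ_two]

theorem sum_uMat_mul {a : ℝ} (ha : a ^ 2 ≤ 1) (lm : ℂ) (z w : Fin 2 → ℂ) (i j : Fin 2) :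
    ∑ k, ∑ l, uMat a lm (i, j) (k, l) * z k * w l
      = z i * w j +
          (lm - 1) * uVec a (i, j) * (a * z 0 * w 0 + (√(1 - a ^ 2) : ℝ) * z 1 * w 1) := by
  rw [← sum_uVec_mul, uMat_eq ha]
  simp only [Matrix.add_apply, one_apply, Prod.mk.injEq, ite_and, Matrix.smul_apply,
    vecMulVec_apply, smul_eq_mul, add_mul, ite_mul, one_mul, zero_mul, Finset.sum_add_distrib,
    Finset.sum_ite_irrel, Finset.sum_ite_eq, Finset.mem_univ, ↓reduceIte, Finset.sum_const_zero, Fin.sum_univ_two]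
  ring

theorem forall_mul_eq_sum_uMat_iff {a : ℝ} (ha0 : a ≠ 0) (ha : a ^ 2 ≤ 1) {lm : ℂ}
    (hl1 : lm ≠ 1) (z w : Fin 2 → ℂ) :
    (∀ i j, z i * w j = ∑ k, ∑ l, uMat a lm (i, j) (k, l) * z k * w l) ↔
      (a : ℂ) * z 0 * w 0 + (√(1 - a ^ 2) : ℝ) * z 1 * w 1 = 0 := by
  simp only [sum_uMat_mul ha, left_eq_add, mul_eq_zero, sub_eq_zero, hl1, false_or]
  refine ⟨fun h => ?_, fun h _ _ => Or.inr h⟩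
  simpa [uVec, ha0] using h 0 0

theorem uMat_row_sub_single_eq_smul_diagonal {a : ℝ} (ha : a ^ 2 ≤ 1) (lm : ℂ) (i j : Fin 2) :
    (of fun k l => uMat a lm (i, j) (k, l) - if (k, l) = (i, j) then 1 else 0)
      = ((lm - 1) * uVec a (i, j)) • diagonal ![(a : ℂ), (√(1 - a ^ 2) : ℝ)] := by
  rw [← of_uVec_eq_diagonal, uMat_eq ha]
  ext k l
  simp [one_apply, vecMulVec_apply, eq_comm, mul_assoc]

theorem smul_diagonal_mulVec_eq_zero_iff {n R : Type*} [Fintype n] [DecidableEq n] [CommRing R]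
    [NoZeroDivisors R] {c : R} {d : n → R} (hc : c ≠ 0) (hd : ∀ i, d i ≠ 0) {v : n → R} :
    (c • diagonal d) *ᵥ v = 0 ↔ v = 0 := by
  simp [funext_iff, smul_mulVec, mulVec_diagonal, hc, hd]

theorem stmt_14_general (a : ℝ) (ha0 : 0 < a) (ha : a ≤ 1 / Real.sqrt 2)
    (lm : ℂ) (hl1 : lm ≠ 1) :
    ({p : (Fin 2 → ℂ) × (Fin 2 → ℂ) |
        (∑ i, ‖p.1 i‖ ^ 2 ≤ 1) ∧ (∑ j, ‖p.2 j‖ ^ 2 ≤ 1) ∧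
        ∀ i j, p.1 i * p.2 j = ∑ k, ∑ l, uMat a lm (i, j) (k, l) * p.1 k * p.2 l}
      = {p : (Fin 2 → ℂ) × (Fin 2 → ℂ) |
          (∑ i, ‖p.1 i‖ ^ 2 ≤ 1) ∧ (∑ j, ‖p.2 j‖ ^ 2 ≤ 1) ∧
          (a : ℂ) * p.1 0 * p.2 0 +
            (Real.sqrt (1 - a ^ 2) : ℂ) * p.1 1 * p.2 1 = 0}) ∧
    ({p : (Fin 2 → ℂ) × (Fin 2 → ℂ) |
        (∑ i, ‖p.1 i‖ ^ 2 ≤ 1) ∧ (∑ j, ‖p.2 j‖ ^ 2 ≤ 1) ∧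
        (∀ i j, p.1 i * p.2 j = ∑ k, ∑ l, uMat a lm (i, j) (k, l) * p.1 k * p.2 l) ∧
        (∀ i j,
          (Matrix.of fun k l =>
            uMat a lm (i, j) (k, l) - if (k, l) = (i, j) then 1 else 0) *ᵥ p.2 = 0 ∧
          (Matrix.of fun k l =>
            uMat a lm (i, j) (k, l) - if (k, l) = (i, j) then 1 else 0)ᵀ *ᵥ p.1 = 0)}
      = {((0 : Fin 2 → ℂ), (0 : Fin 2 → ℂ))}) := by
  have ha2 : a ^ 2 < 1 := by
    have := pow_le_pow_left₀ ha0.le ha 2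
    rw [div_pow, Real.sq_sqrt zero_le_two] at this
    linarith
  refine ⟨?_, ?_⟩
  · ext ⟨z, w⟩
    exact and_congr_right fun _ => and_congr_right fun _ =>
      forall_mul_eq_sum_uMat_iff ha0.ne' ha2.le hl1 z w
  · ext ⟨z, w⟩
    rw [Set.mem_singleton_iff, Prod.mk.injEq]
    constructor
    · rintro ⟨-, -, -, hC⟩
      have hc : (lm - 1) * uVec a (0, 0) ≠ 0 := by
        simpa [uVec, sub_eq_zero, hl1] using ha0.ne'
      have hd : ∀ i, ![(a : ℂ), (√(1 - a ^ 2) : ℝ)] i ≠ 0 := by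
        intro i
        fin_cases i
        · simpa using ha0.ne'
        · simpa [Real.sqrt_eq_zero', sub_nonpos, not_le] using ha2
      obtain ⟨hw, hz⟩ := hC 0 0
      rw [uMat_row_sub_single_eq_smul_diagonal ha2.le] at hw hz
      rw [transpose_smul, diagonal_transpose] at hz
      exact ⟨(smul_diagonal_mulVec_eq_zero_iff hc hd).1 hz,
        (smul_diagonal_mulVec_eq_zero_iff hc hd).1 hw⟩
    · rintro ⟨rfl, rfl⟩
      simp

/-- for `u = u(a,λ)` with `0 < a ≤ 1/√2`, `Ω_u` consists of the pairs
`(z,w)` in the product of closed unit balls with `a·z₁·w₁ + (1−a²)^{1/2}·z₂·w₂ = 0`,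
and the core is `{(0,0)}`. -/
theorem stmt_14 (a : ℝ) (ha0 : 0 < a) (ha : a ≤ 1 / Real.sqrt 2)
    (lm : ℂ) (hl : ‖lm‖ = 1) (hl1 : lm ≠ 1) :
    ({p : (Fin 2 → ℂ) × (Fin 2 → ℂ) |
        (∑ i, ‖p.1 i‖ ^ 2 ≤ 1) ∧ (∑ j, ‖p.2 j‖ ^ 2 ≤ 1) ∧
        ∀ i j, p.1 i * p.2 j = ∑ k, ∑ l, uMat a lm (i, j) (k, l) * p.1 k * p.2 l}
      = {p : (Fin 2 → ℂ) × (Fin 2 → ℂ) |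
          (∑ i, ‖p.1 i‖ ^ 2 ≤ 1) ∧ (∑ j, ‖p.2 j‖ ^ 2 ≤ 1) ∧
          (a : ℂ) * p.1 0 * p.2 0 +
            (Real.sqrt (1 - a ^ 2) : ℂ) * p.1 1 * p.2 1 = 0}) ∧
    ({p : (Fin 2 → ℂ) × (Fin 2 → ℂ) |
        (∑ i, ‖p.1 i‖ ^ 2 ≤ 1) ∧ (∑ j, ‖p.2 j‖ ^ 2 ≤ 1) ∧
        (∀ i j, p.1 i * p.2 j = ∑ k, ∑ l, uMat a lm (i, j) (k, l) * p.1 k * p.2 l) ∧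
        (∀ i j,
          (Matrix.of fun k l =>
            uMat a lm (i, j) (k, l) - if (k, l) = (i, j) then 1 else 0) *ᵥ p.2 = 0 ∧
          (Matrix.of fun k l =>
            uMat a lm (i, j) (k, l) - if (k, l) = (i, j) then 1 else 0)ᵀ *ᵥ p.1 = 0)}
      = {((0 : Fin 2 → ℂ), (0 : Fin 2 → ℂ))}) :=
  stmt_14_general a ha0 ha lm hl1
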